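/- In particular, the coefficient of x^{m+n+1} in the power series ₂F₁(−ν−n, −m; −m−n; x) − (1−x)^ν · ₂F₁(ν−m, −n; −m−n; x) equals (−1)^m · C(n+ν, m+n+1)/C(m+n, m), and all coefficients of x^k for 0 ≤ k ≤ m+n vanish. -/

import Mathlib

/-! Both statements come from the Pfaff–Saalschütz identity
`∑ᵢ C(k,i) (a)ᵢ (b)ᵢ (c+i)_{k-i} (c-a-b)_{k-i} = (c-a)ₖ (c-b)ₖ`, proved by a Wilf–Zeilberger
recursion in `k`. Divided by `(c)ₖ k!`, it says that the `k`-th coefficients of `₂F₁(c-a, c-b; c; x)`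
and `(1-x)^(a+b-c) ₂F₁(a, b; c; x)` agree whenever `(c)ₖ ≠ 0` (Euler's transformation); with
`a = ν-m`, `b = -n`, `c = -m-n` this gives the vanishing for `k ≤ m+n`. At `k = m+n+1` both sides
of the identity carry the factor `c+m+n`: cancelling it and letting `c → -m-n` by continuity gives
the leading coefficient. -/

open Finset PowerSeries

/-- Pochhammer symbol `(a)_k = a(a+1)⋯(a+k-1)`. -/
noncomputable def poch (a : ℝ) (k : ℕ) : ℝ := ∏ i ∈ Finset.range k, (a + i)

/-- Generalized binomial coefficient `C(a,k) = a(a-1)⋯(a-k+1)/k!`. -/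
noncomputable def gchoose (a : ℝ) (k : ℕ) : ℝ :=
  (∏ i ∈ Finset.range k, (a - i)) / k.factorial

/-- The (formal) hypergeometric series `₂F₁(a, b; c; x) ∈ ℝ⟦x⟧`. -/
noncomputable def hypSeries (a b c : ℝ) : PowerSeries ℝ :=
  PowerSeries.mk fun k => poch a k * poch b k / (poch c k * k.factorial)

/-- The formal binomial series `(1-x)^ν = ∑_k C(ν,k)(-1)^k x^k ∈ ℝ⟦x⟧`. -/
noncomputable def binomOneSub (ν : ℝ) : PowerSeries ℝ :=
  PowerSeries.mk fun k => gchoose ν k * (-1) ^ k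

open scoped Nat

lemma poch_zero (a : ℝ) : poch a 0 = 1 := prod_range_zero _

lemma poch_succ (a : ℝ) (k : ℕ) : poch a (k + 1) = poch a k * (a + k) := prod_range_succ _ _

lemma poch_succ' (a : ℝ) (k : ℕ) : poch a (k + 1) = a * poch (a + 1) k := by
  simp only [poch, prod_range_succ', Nat.cast_succ, Nat.cast_zero, add_zero, add_assoc,
    add_comm (1 : ℝ), mul_comm a]

lemma poch_add (a : ℝ) (j k : ℕ) : poch a (j + k) = poch a j * poch (a + j) k := by
  simp only [poch, prod_range_add, Nat.cast_add, add_assoc]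

lemma poch_neg_natCast_of_lt {N k : ℕ} (h : N < k) : poch (-N) k = 0 :=
  prod_eq_zero (mem_range.mpr h) (neg_add_cancel _)

lemma poch_neg_natCast_ne_zero {N k : ℕ} (h : k ≤ N) : poch (-N) k ≠ 0 :=
  prod_ne_zero_iff.mpr fun l hl => by
    have : (l : ℝ) < N := by exact_mod_cast (mem_range.mp hl).trans_le h
    linarith

lemma poch_neg_natCast_self (N : ℕ) : poch (-N) N = (-1) ^ N * N ! := by
  induction N with
  | zero => simp [poch_zero]
  | succ N ih =>
    rw [poch_succ', show -((N + 1 : ℕ) : ℝ) + 1 = -N by push_cast; ring, ih, Nat.factorial_succ]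
    push_cast
    ring

lemma poch_one (n : ℕ) : poch 1 n = n ! := by
  induction n with
  | zero => simp [poch_zero]
  | succ n ih => rw [poch_succ, ih, Nat.factorial_succ]; push_cast; ring

lemma gchoose_eq_poch (x : ℝ) (k : ℕ) : gchoose x k = (-1) ^ k * poch (-x) k / k ! := by
  rw [gchoose, poch, show (-1 : ℝ) ^ k = ∏ _i ∈ range k, (-1 : ℝ) by simp, ← prod_mul_distrib]
  congr 1
  exact prod_congr rfl fun i _ => by ring

@[fun_prop]
lemma Continuous.poch {f : ℝ → ℝ} (hf : Continuous f) (k : ℕ) :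
    Continuous fun x => poch (f x) k := by
  unfold _root_.poch
  fun_prop

section Saalschutz

variable (a b c : ℝ)

noncomputable def saalschutzTerm (k i : ℕ) : ℝ :=
  k.choose i * (poch a i * poch b i * (poch (c + i) (k - i) * poch (c - a - b) (k - i)))

/-- The Wilf–Zeilberger certificate of the Pfaff–Saalschütz sum. -/
noncomputable def saalschutzCert (k : ℕ) : ℕ → ℝ
  | 0 => 0
  | i + 1 => (a + i) * (b + i) * saalschutzTerm a b c k i

lemma saalschutzTerm_succ {i k : ℕ} (hik : i ≤ k) :
    saalschutzTerm a b c (k + 1) i = (c + k - a) * (c + k - b) * saalschutzTerm a b c k i -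
      (saalschutzCert a b c k (i + 1) - saalschutzCert a b c k i) := by
  obtain ⟨j, rfl⟩ := Nat.exists_eq_add_of_le hik
  cases i with
  | zero =>
    simp only [saalschutzTerm, saalschutzCert, Nat.choose_zero_right, Nat.sub_zero, poch_zero,
      Nat.cast_zero, Nat.zero_add, poch_succ]
    push_cast
    ring
  | succ i =>
    have hj : i + 1 + j - i = j + 1 := by omega
    have hchoose : ((i + 1 + j + 1).choose (i + 1) : ℝ) =
        (i + 1 + j).choose i + (i + 1 + j).choose (i + 1) := by
      rw [add_right_comm i 1 j, Nat.choose_succ_succ]; push_cast; ring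
    have hpascal : ((i + 1 + j).choose (i + 1) : ℝ) * (i + 1) = (i + 1 + j).choose i * (j + 1) := by
      have := Nat.choose_succ_right_eq (i + 1 + j) i
      rw [hj] at this
      exact_mod_cast this
    simp only [saalschutzTerm, saalschutzCert, hj, hchoose, Nat.add_sub_cancel_left,
      show i + 1 + j + 1 - (i + 1) = j + 1 by omega]
    rw [show c + ((i + 1 : ℕ) : ℝ) = c + i + 1 by push_cast; ring, poch_succ (c + i + 1) j,
      poch_succ' (c + i) j, poch_succ a i, poch_succ b i, poch_succ (c - a - b) j]
    push_cast
    linear_combination -(poch a i * poch b i * poch (c + i + 1) j * poch (c - a - b) j *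
      (a + i) * (b + i) * (c - a - b + j)) * hpascal

lemma sum_saalschutzTerm_succ (k : ℕ) :
    ∑ i ∈ range (k + 2), saalschutzTerm a b c (k + 1) i =
      (c + k - a) * (c + k - b) * ∑ i ∈ range (k + 1), saalschutzTerm a b c k i := by
  rw [sum_range_succ, sum_congr rfl fun i hi => saalschutzTerm_succ a b c
      (mem_range_succ_iff.mp hi), sum_sub_distrib, sum_range_sub, ← mul_sum]
  simp only [saalschutzTerm, saalschutzCert, Nat.choose_self, Nat.cast_one, tsub_self, poch_zero,
    poch_succ]
  ring

theorem sum_saalschutzTerm (k : ℕ) :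
    ∑ i ∈ range (k + 1), saalschutzTerm a b c k i = poch (c - a) k * poch (c - b) k := by
  induction k with
  | zero => simp [saalschutzTerm, poch_zero]
  | succ k ih => rw [sum_saalschutzTerm_succ, ih, poch_succ, poch_succ]; ring

end Saalschutz

/-- The degenerate case `b = -n`, `k = m + n + 1` of the Pfaff–Saalschütz identity, divided by the
common factor `c + m + n` of both sides. -/
lemma sum_saalschutz_neg_natCast (a c : ℝ) (m n : ℕ) :
    ∑ i ∈ range (m + n + 1), ((m + n + 1).choose i : ℝ) *
      (poch a i * poch (-n) i * (poch (c + i) (m + n - i) * poch (c - a + n) (m + n + 1 - i))) =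
      poch (c - a) (m + n + 1) * poch (c + n) m * poch (c + n + m + 1) n := by
  revert c
  rw [← funext_iff]
  refine Continuous.ext_on (dense_compl_singleton (-(m + n : ℝ))) (by fun_prop) (by fun_prop)
    fun c hc => ?_
  have hc : c + (m + n) ≠ 0 := fun h => hc (eq_neg_of_add_eq_zero_left h)
  have hsaal := sum_saalschutzTerm a (-n) c (m + n + 1)
  rw [sum_range_succ, saalschutzTerm, poch_neg_natCast_of_lt (by omega : n < m + n + 1), mul_zero,
    zero_mul, mul_zero, add_zero, sub_neg_eq_add] at hsaal
  have hfactor : poch (c + n) (m + n + 1) =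
      (c + (m + n)) * (poch (c + n) m * poch (c + n + m + 1) n) := by
    rw [show m + n + 1 = m + (n + 1) by omega, poch_add, poch_succ']
    ring
  have hterm : ∀ i ∈ range (m + n + 1), saalschutzTerm a (-n) c (m + n + 1) i =
      (c + (m + n)) * ((m + n + 1).choose i * (poch a i * poch (-n) i *
        (poch (c + i) (m + n - i) * poch (c - a + n) (m + n + 1 - i)))) := by
    intro i hi
    have hi : i ≤ m + n := mem_range_succ_iff.mp hi
    rw [saalschutzTerm, sub_neg_eq_add, show m + n + 1 - i = m + n - i + 1 by omega, poch_succ,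
      show c + i + (m + n - i : ℕ) = c + (m + n) by push_cast [hi]; ring]
    ring
  refine mul_left_cancel₀ hc ?_
  rw [mul_sum, ← sum_congr rfl hterm, hsaal, hfactor]
  ring

lemma coeff_hypSeries (a b c : ℝ) (k : ℕ) :
    coeff k (hypSeries a b c) = poch a k * poch b k / (poch c k * k !) :=
  coeff_mk _ _

lemma coeff_binomOneSub (ν : ℝ) (k : ℕ) : coeff k (binomOneSub ν) = poch (-ν) k / k ! := by
  rw [binomOneSub, coeff_mk, gchoose_eq_poch, div_mul_eq_mul_div, mul_right_comm, ← pow_add,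
    ← two_mul, pow_mul, neg_one_sq, one_pow, one_mul]

lemma coeff_binomOneSub_mul_hypSeries (ν a b c : ℝ) (k : ℕ) :
    coeff k (binomOneSub ν * hypSeries a b c) = ∑ i ∈ range (k + 1),
      poch a i * poch b i / (poch c i * i !) * (poch (-ν) (k - i) / (k - i)!) := by
  rw [mul_comm, coeff_mul, Nat.sum_antidiagonal_eq_sum_range_succ_mk]
  simp only [coeff_hypSeries, coeff_binomOneSub]

lemma hypSeries_term_mul_eq {a b c d : ℝ} {i k N : ℕ} (hik : i ≤ k) (hiN : i ≤ N)
    (hc : poch c N ≠ 0) :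
    poch a i * poch b i / (poch c i * i !) * (poch d (k - i) / (k - i)!) =
      k.choose i * (poch a i * poch b i * (poch (c + i) (N - i) * poch d (k - i))) /
        (poch c N * k !) := by
  have hchoose : (k.choose i : ℝ) * i ! * (k - i)! = k ! := by
    exact_mod_cast Nat.choose_mul_factorial_mul_factorial hik
  have hsplit : poch c N = poch c i * poch (c + i) (N - i) := by
    rw [← poch_add, Nat.add_sub_cancel' hiN]
  rw [hsplit] at hc ⊢
  obtain ⟨hci, hcN⟩ := mul_ne_zero_iff.mp hc
  field_simp
  linear_combination -(poch a i * poch b i * poch d (k - i)) * hchoose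

theorem coeff_hypSeries_eq_coeff_binomOneSub_mul (a b c : ℝ) {k : ℕ} (hc : poch c k ≠ 0) :
    coeff k (hypSeries (c - a) (c - b) c) = coeff k (binomOneSub (a + b - c) * hypSeries a b c) := by
  rw [coeff_binomOneSub_mul_hypSeries, show -(a + b - c) = c - a - b by ring,
    sum_congr rfl fun i hi => hypSeries_term_mul_eq (mem_range_succ_iff.mp hi)
      (mem_range_succ_iff.mp hi) hc, ← sum_div, coeff_hypSeries]
  exact congrArg (· / _) (sum_saalschutzTerm a b c k).symm

lemma coeff_binomOneSub_mul_hypSeries_top (ν : ℝ) (m n : ℕ) :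
    coeff (m + n + 1) (binomOneSub ν * hypSeries (ν - m) (-n) (-m - n)) =
      -((-1) ^ m * gchoose (n + ν) (m + n + 1) / (m + n).choose m) := by
  have hc : -(m : ℝ) - n = -((m + n : ℕ) : ℝ) := by push_cast; ring
  have hsum := sum_saalschutz_neg_natCast (ν - m) (-((m + n : ℕ) : ℝ)) m n
  rw [show -((m + n : ℕ) : ℝ) - (ν - m) + n = -ν by push_cast; ring,
    show -((m + n : ℕ) : ℝ) - (ν - m) = -ν - n by push_cast; ring,
    show -((m + n : ℕ) : ℝ) + n + m + 1 = 1 by push_cast; ring,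
    show -((m + n : ℕ) : ℝ) + n = -m by push_cast; ring,
    poch_neg_natCast_self, poch_one] at hsum
  rw [coeff_binomOneSub_mul_hypSeries, sum_range_succ,
    poch_neg_natCast_of_lt (by omega : n < m + n + 1), mul_zero, zero_div, zero_mul, add_zero, hc,
    sum_congr rfl fun i hi => hypSeries_term_mul_eq (mem_range_succ_iff.mp hi).step
      (mem_range_succ_iff.mp hi) (poch_neg_natCast_ne_zero le_rfl), ← sum_div, hsum, poch_neg_natCast_self, gchoose_eq_poch,
    show -(n + ν) = -ν - n by ring]
  have hchoose : ((m + n).choose m : ℝ) * m ! * n ! = (m + n)! := by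
    exact_mod_cast Nat.choose_symm_add ▸ Nat.add_choose_mul_factorial_mul_factorial m n
  rw [← hchoose, pow_succ]
  field_simp
  rw [← pow_mul, pow_mul', neg_one_sq, one_pow, mul_one]

theorem stmt_3_general (ν : ℝ) (m n : ℕ) :
    (PowerSeries.coeff (m + n + 1)
        (hypSeries (-ν - n) (-(m : ℝ)) (-(m : ℝ) - n) -
          binomOneSub ν * hypSeries (ν - m) (-(n : ℝ)) (-(m : ℝ) - n)) =
      (-1) ^ m * gchoose ((n : ℝ) + ν) (m + n + 1) / ((m + n).choose m)) ∧
    ∀ k ≤ m + n,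
      PowerSeries.coeff k
        (hypSeries (-ν - n) (-(m : ℝ)) (-(m : ℝ) - n) -
          binomOneSub ν * hypSeries (ν - m) (-(n : ℝ)) (-(m : ℝ) - n)) = 0 := by
  refine ⟨?_, fun k hk => ?_⟩
  · rw [map_sub, coeff_hypSeries, poch_neg_natCast_of_lt (by omega : m < m + n + 1), mul_zero,
      zero_div, coeff_binomOneSub_mul_hypSeries_top, zero_sub, neg_neg]
  · have hc : poch (-(m : ℝ) - n) k ≠ 0 := by
      rw [show -(m : ℝ) - n = -((m + n : ℕ) : ℝ) by push_cast; ring]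
      exact poch_neg_natCast_ne_zero hk
    have h := coeff_hypSeries_eq_coeff_binomOneSub_mul (ν - m) (-n) (-m - n) hc
    rw [show -(m : ℝ) - n - (ν - m) = -ν - n by ring, show -(m : ℝ) - n - -n = -m by ring,
      show ν - m + -n - (-m - n) = ν by ring] at h
    rw [map_sub, h, sub_self]

/-- **Order of vanishing and leading coefficient of the Hermite–Padé remainder:**
the coefficient of `x^{m+n+1}` in
`₂F₁(−ν−n, −m; −m−n; x) − (1−x)^ν · ₂F₁(ν−m, −n; −m−n; x)`
equals `(−1)^m C(n+ν, m+n+1)/C(m+n, m)`, and the coefficients of `x^k` vanish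
for all `0 ≤ k ≤ m+n`. -/
theorem stmt_3 (ν : ℝ) (m n : ℕ) (hν : ∀ j : ℕ, ν ≠ -((j : ℝ) + 1)) :
    (PowerSeries.coeff (m + n + 1)
        (hypSeries (-ν - n) (-(m : ℝ)) (-(m : ℝ) - n) -
          binomOneSub ν * hypSeries (ν - m) (-(n : ℝ)) (-(m : ℝ) - n)) =
      (-1) ^ m * gchoose ((n : ℝ) + ν) (m + n + 1) / ((m + n).choose m)) ∧
    ∀ k ≤ m + n,
      PowerSeries.coeff k
        (hypSeries (-ν - n) (-(m : ℝ)) (-(m : ℝ) - n) -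
          binomOneSub ν * hypSeries (ν - m) (-(n : ℝ)) (-(m : ℝ) - n)) = 0 :=
  stmt_3_general ν m n
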